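/- Let 1 < q ≤ p < ∞. The space M̃^p_q(ℝⁿ) (closure of simple functions of finite-measure support in the Morrey norm) coincides with M̂^p_q(ℝⁿ), the set of functions in M^p_q(ℝⁿ) of absolutely continuous norm. -/

import Mathlib

open MeasureTheory ENNReal Set Filter

/-- The open axis-parallel cube with corner `a` and side length `s`. -/
noncomputable def cube (n : ℕ) (a : Fin n → ℝ) (s : ℝ) : Set (Fin n → ℝ) :=
  Set.univ.pi fun i => Set.Ioo (a i) (a i + s)

/-- The Morrey norm `‖f‖_{M^p_q}` on `ℝⁿ`. -/
noncomputable def morreyNorm (n : ℕ) (p q : ℝ) (f : (Fin n → ℝ) → ℝ) : ℝ≥0∞ :=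
  ⨆ (a : Fin n → ℝ) (s : ℝ) (_ : 0 < s),
    ENNReal.ofReal ((s ^ n) ^ (1 / p - 1 / q)) *
      (∫⁻ x in cube n a s, ENNReal.ofReal (|f x| ^ q)) ^ (1 / q)

/-- The Hölder conjugate exponent `p' = p/(p-1)`. -/
noncomputable def conjExp (p : ℝ) : ℝ := p / (p - 1)

/-- A `(p',q')`-block: a measurable function supported on a cube `Q` with
`‖b‖_{L^{q'}} ≤ |Q|^{1/p-1/q}`. -/
def IsBlock (n : ℕ) (p q : ℝ) (b : (Fin n → ℝ) → ℝ) : Prop :=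
  Measurable b ∧ ∃ (a : Fin n → ℝ) (s : ℝ), 0 < s ∧
    Function.support b ⊆ cube n a s ∧
    (∫⁻ x, ENNReal.ofReal (|b x| ^ conjExp q)) ^ (1 / conjExp q) ≤
      ENNReal.ofReal ((s ^ n) ^ (1 / p - 1 / q))

/-- `f = ∑ₖ λₖ bₖ` a.e. with absolutely convergent coefficients and `(p',q')`-blocks. -/
def IsBlockRep (n : ℕ) (p q : ℝ) (f : (Fin n → ℝ) → ℝ) (l : ℕ → ℝ)
    (b : ℕ → (Fin n → ℝ) → ℝ) : Prop :=
  (∀ k, IsBlock n p q (b k)) ∧ Summable (fun k => |l k|) ∧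
    ∀ᵐ x : Fin n → ℝ, Summable (fun k => l k * b k x) ∧ f x = ∑' k, l k * b k x

/-- Membership in the block space `B^{p'}_{q'}(ℝⁿ)`. -/
def MemBlockSpace (n : ℕ) (p q : ℝ) (f : (Fin n → ℝ) → ℝ) : Prop :=
  ∃ l b, IsBlockRep n p q f l b

/-- The block space norm `‖f‖_{B^{p'}_{q'}}`: infimal `ℓ¹`-sum of coefficients. -/
noncomputable def blockNorm (n : ℕ) (p q : ℝ) (f : (Fin n → ℝ) → ℝ) : ℝ≥0∞ :=
  ⨅ (l : ℕ → ℝ) (b : ℕ → (Fin n → ℝ) → ℝ) (_ : IsBlockRep n p q f l b),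
    ENNReal.ofReal (∑' k, |l k|)

/-- A finite linear combination of characteristic functions of measurable sets of
finite measure. -/
def IsFinSimple (n : ℕ) (g : (Fin n → ℝ) → ℝ) : Prop :=
  ∃ (N : ℕ) (c : Fin N → ℝ) (A : Fin N → Set (Fin n → ℝ)),
    (∀ i, MeasurableSet (A i) ∧ volume (A i) < ⊤) ∧
    g = fun x => ∑ i, c i * (A i).indicator (fun _ => (1 : ℝ)) x

/-- Membership in M̃^p_q: the closure in M^p_q of the finite simple functions. -/
def MemMorreyTilde (n : ℕ) (p q : ℝ) (f : (Fin n → ℝ) → ℝ) : Prop :=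
  Measurable f ∧ morreyNorm n p q f < ⊤ ∧
    ∀ ε : ℝ, 0 < ε → ∃ g, IsFinSimple n g ∧
      morreyNorm n p q (fun x => f x - g x) ≤ ENNReal.ofReal ε

/-- Membership in M̂^p_q: functions of M^p_q with absolutely continuous norm. -/
def MemMorreyHat (n : ℕ) (p q : ℝ) (f : (Fin n → ℝ) → ℝ) : Prop :=
  Measurable f ∧ morreyNorm n p q f < ⊤ ∧
    ∀ E : ℕ → Set (Fin n → ℝ), (∀ k, MeasurableSet (E k)) →
      (∀ᵐ x : Fin n → ℝ,
        Tendsto (fun k => (E k).indicator (fun _ => (1 : ℝ)) x) atTop (nhds 0)) →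
      Tendsto (fun k => morreyNorm n p q ((E k).indicator f)) atTop (nhds 0)

/-!
For `q ≤ p`, testing the Morrey norm of a characteristic function on a cube `Q` gives
`|Q|^{1/p-1/q} |Q ∩ B|^{1/q} ≤ |B|^{1/p}`, so `‖χ_B‖_{M^p_q} ≤ |B|^{1/p}`. Hence restricting a
simple function `∑ cᵢ χ_{Aᵢ}` to `E` costs at most `∑ |cᵢ| |E ∩ Aᵢ|^{1/p}`, which tends to `0`
by dominated convergence when `χ_E → 0` a.e.; absolute continuity of the norm then passes to
Morrey limits of simple functions. Conversely, if `f` has absolutely continuous norm, removing the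
set where `|f| > k` or `‖x‖ > k` costs little for large `k`; the rest is bounded and supported in
a ball, so rounding it down to a fine grid `δℤ` gives a simple function within `δ χ_{ball}`, i.e.
within `δ |ball|^{1/p}` in Morrey norm.
-/

open scoped NNReal Topology

theorem tendsto_indicator_one_nhds_zero_iff {α ι : Type*} {L : Filter ι} {E : ι → Set α} {x : α} :
    Tendsto (fun k => (E k).indicator (fun _ => (1 : ℝ)) x) L (𝓝 0) ↔ ∀ᶠ k in L, x ∉ E k := by
  simpa using tendsto_indicator_const_apply_iff_eventually L (1 : ℝ) x (As := E) (A := ∅)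

theorem tendsto_measure_inter_of_tendsto_indicator {α : Type*} [MeasurableSpace α] {μ : Measure α}
    {E : ℕ → Set α} (hE : ∀ k, MeasurableSet (E k))
    (hlim : ∀ᵐ x ∂μ, Tendsto (fun k => (E k).indicator (fun _ => (1 : ℝ)) x) atTop (𝓝 0))
    {A : Set α} (hA : MeasurableSet A) (hAfin : μ A ≠ ⊤) :
    Tendsto (fun k => μ (E k ∩ A)) atTop (𝓝 0) := by
  refine measure_empty (μ := μ) ▸ tendsto_measure_of_ae_tendsto_indicator atTop
    MeasurableSet.empty (fun k => (hE k).inter hA) hA hAfin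
    (Eventually.of_forall fun _ => inter_subset_right) ?_
  filter_upwards [hlim] with x hx
  filter_upwards [tendsto_indicator_one_nhds_zero_iff.1 hx] with k hk
  simp [hk]

theorem rpow_lintegral_ofReal_abs_rpow {α : Type*} [MeasurableSpace α] {q : ℝ} (hq : 0 < q)
    (μ : Measure α) (u : α → ℝ) :
    (∫⁻ x, ENNReal.ofReal (|u x| ^ q) ∂μ) ^ (1 / q) = eLpNorm u (ENNReal.ofReal q) μ := by
  rw [eLpNorm_eq_lintegral_rpow_enorm_toReal (by simpa using hq) ofReal_ne_top,
    ENNReal.toReal_ofReal hq.le]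
  simp_rw [Real.enorm_eq_ofReal_abs, ENNReal.ofReal_rpow_of_nonneg (abs_nonneg _) hq.le]

theorem ENNReal.rpow_sub_mul_rpow_le {p q : ℝ} (hq : 0 < q) (hqp : q ≤ p) {T m V : ℝ≥0∞}
    (hT0 : T ≠ 0) (hT : T ≠ ⊤) (hmT : m ≤ T) (hmV : m ≤ V) :
    T ^ (1 / p - 1 / q) * m ^ (1 / q) ≤ V ^ (1 / p) := by
  have hp : 0 ≤ 1 / p := by have := hq.trans_le hqp; positivity
  have hd : 0 ≤ 1 / q - 1 / p := sub_nonneg.2 (one_div_le_one_div_of_le hq hqp)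
  calc T ^ (1 / p - 1 / q) * m ^ (1 / q)
      = T ^ (1 / p - 1 / q) * (m ^ (1 / p) * m ^ (1 / q - 1 / p)) := by
        rw [← ENNReal.rpow_add_of_nonneg _ _ hp hd, add_sub_cancel]
    _ ≤ T ^ (1 / p - 1 / q) * (V ^ (1 / p) * T ^ (1 / q - 1 / p)) := by gcongr
    _ = V ^ (1 / p) * T ^ (1 / p - 1 / q + (1 / q - 1 / p)) := by
        rw [ENNReal.rpow_add _ _ hT0 hT]; ring
    _ = V ^ (1 / p) := by simp

section MorreyNorm

variable {n : ℕ} {p q : ℝ}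

theorem volume_cube (a : Fin n → ℝ) {s : ℝ} (hs : 0 ≤ s) :
    volume (cube n a s) = ENNReal.ofReal (s ^ n) := by
  simp [cube, volume_pi, Real.volume_Ioo, ENNReal.ofReal_pow hs]

theorem morreyNorm_eq_iSup_eLpNorm (hq : 0 < q) (f : (Fin n → ℝ) → ℝ) :
    morreyNorm n p q f = ⨆ (a : Fin n → ℝ) (s : ℝ) (_ : 0 < s),
      ENNReal.ofReal ((s ^ n) ^ (1 / p - 1 / q)) *
        eLpNorm f (ENNReal.ofReal q) (volume.restrict (cube n a s)) := by
  simp_rw [morreyNorm, rpow_lintegral_ofReal_abs_rpow hq]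

theorem morreyNorm_le_iff (hq : 0 < q) {f : (Fin n → ℝ) → ℝ} {C : ℝ≥0∞} :
    morreyNorm n p q f ≤ C ↔ ∀ (a : Fin n → ℝ) (s : ℝ), 0 < s →
      ENNReal.ofReal ((s ^ n) ^ (1 / p - 1 / q)) *
        eLpNorm f (ENNReal.ofReal q) (volume.restrict (cube n a s)) ≤ C := by
  simp only [morreyNorm_eq_iSup_eLpNorm hq, iSup_le_iff]

theorem morreyNorm_mono (hq : 0 < q) {u v : (Fin n → ℝ) → ℝ} (h : ∀ x, |u x| ≤ |v x|) :
    morreyNorm n p q u ≤ morreyNorm n p q v := by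
  simp_rw [morreyNorm_eq_iSup_eLpNorm hq]
  gcongr with a s hs
  exact eLpNorm_mono h

theorem morreyNorm_indicator_le (hq : 0 < q) (s : Set (Fin n → ℝ)) (u : (Fin n → ℝ) → ℝ) :
    morreyNorm n p q (s.indicator u) ≤ morreyNorm n p q u :=
  morreyNorm_mono hq fun x => by simpa only [Real.norm_eq_abs] using norm_indicator_le_norm_self u x

theorem morreyNorm_const_mul (hq : 0 < q) (c : ℝ) (u : (Fin n → ℝ) → ℝ) :
    morreyNorm n p q (fun x => c * u x) = ENNReal.ofReal |c| * morreyNorm n p q u := by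
  simp_rw [morreyNorm_eq_iSup_eLpNorm hq, ENNReal.mul_iSup]
  congr! 5 with a s hs
  rw [show (fun x => c * u x) = c • u from rfl, eLpNorm_const_smul, Real.enorm_eq_ofReal_abs]
  ring

theorem morreyNorm_zero (hq : 0 < q) : morreyNorm n p q (fun _ => 0) = 0 := by
  simp [morreyNorm_eq_iSup_eLpNorm hq]

theorem morreyNorm_add_le (hq : 1 ≤ q) {u v : (Fin n → ℝ) → ℝ}
    (hu : Measurable u) (hv : Measurable v) :
    morreyNorm n p q (fun x => u x + v x) ≤ morreyNorm n p q u + morreyNorm n p q v := by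
  have hq0 : 0 < q := zero_lt_one.trans_le hq
  refine (morreyNorm_le_iff hq0).2 fun a s hs => ?_
  calc _ ≤ ENNReal.ofReal ((s ^ n) ^ (1 / p - 1 / q)) *
        (eLpNorm u (ENNReal.ofReal q) (volume.restrict (cube n a s)) +
          eLpNorm v (ENNReal.ofReal q) (volume.restrict (cube n a s))) := by
        gcongr
        exact eLpNorm_add_le hu.aestronglyMeasurable hv.aestronglyMeasurable
          (by simpa using hq)
    _ ≤ morreyNorm n p q u + morreyNorm n p q v := by
      rw [mul_add]
      gcongr <;> exact (morreyNorm_le_iff hq0).1 le_rfl a s hs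

theorem morreyNorm_sum_le (hq : 1 ≤ q) {ι : Type*} (t : Finset ι)
    {u : ι → (Fin n → ℝ) → ℝ} (hu : ∀ i, Measurable (u i)) :
    morreyNorm n p q (fun x => ∑ i ∈ t, u i x) ≤ ∑ i ∈ t, morreyNorm n p q (u i) := by
  induction t using Finset.cons_induction with
  | empty => simp [morreyNorm_zero (zero_lt_one.trans_le hq)]
  | cons i t hi ih =>
    simp only [Finset.sum_cons]
    exact (morreyNorm_add_le hq (hu i) (Finset.measurable_sum t fun j _ => hu j)).trans
      (add_le_add_right ih _)

theorem morreyNorm_indicator_one_le (hq : 0 < q) (hqp : q ≤ p) {B : Set (Fin n → ℝ)}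
    (hB : MeasurableSet B) :
    morreyNorm n p q (B.indicator fun _ => 1) ≤ volume B ^ (1 / p) := by
  refine (morreyNorm_le_iff hq).2 fun a s hs => ?_
  rw [eLpNorm_indicator_const hB (by simpa using hq) ofReal_ne_top, Measure.restrict_apply hB,
    toReal_ofReal hq.le, enorm_one, one_mul, ← ENNReal.ofReal_rpow_of_pos (pow_pos hs n),
    ← volume_cube a hs.le]
  exact ENNReal.rpow_sub_mul_rpow_le hq hqp (by simp [volume_cube a hs.le, hs])
    (by simp [volume_cube a hs.le]) (measure_mono inter_subset_right)
    (measure_mono inter_subset_left)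

theorem morreyNorm_le_of_abs_le_mul_indicator (hq : 0 < q) (hqp : q ≤ p) {u : (Fin n → ℝ) → ℝ}
    {B : Set (Fin n → ℝ)} (hB : MeasurableSet B) {δ : ℝ≥0}
    (hu : ∀ x, |u x| ≤ δ * B.indicator (fun _ => 1) x) :
    morreyNorm n p q u ≤ δ * volume B ^ (1 / p) :=
  calc morreyNorm n p q u
      ≤ morreyNorm n p q (fun x => (δ : ℝ) * B.indicator (fun _ => 1) x) :=
        morreyNorm_mono hq fun x => (hu x).trans (le_abs_self _)
    _ = δ * morreyNorm n p q (B.indicator fun _ => 1) := by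
        rw [morreyNorm_const_mul hq, NNReal.abs_eq, ofReal_coe_nnreal]
    _ ≤ δ * volume B ^ (1 / p) := by
        gcongr
        exact morreyNorm_indicator_one_le hq hqp hB

theorem morreyNorm_sum_const_mul_indicator_le (hq : 1 ≤ q) (hqp : q ≤ p) {ι : Type*}
    (t : Finset ι) (c : ι → ℝ) {A : ι → Set (Fin n → ℝ)} (hA : ∀ i, MeasurableSet (A i)) :
    morreyNorm n p q (fun x => ∑ i ∈ t, c i * (A i).indicator (fun _ => 1) x) ≤
      ∑ i ∈ t, ENNReal.ofReal |c i| * volume (A i) ^ (1 / p) := by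
  have hq0 : 0 < q := zero_lt_one.trans_le hq
  refine (morreyNorm_sum_le hq t fun i => (measurable_const.indicator (hA i)).const_mul _).trans ?_
  gcongr with i
  rw [morreyNorm_const_mul hq0]
  gcongr
  exact morreyNorm_indicator_one_le hq0 hqp (hA i)

end MorreyNorm

section FinSimple

variable {n : ℕ} {p q : ℝ} {g : (Fin n → ℝ) → ℝ}

theorem IsFinSimple.measurable (hg : IsFinSimple n g) : Measurable g := by
  obtain ⟨N, c, A, hA, rfl⟩ := hg
  exact Finset.measurable_sum _ fun i _ => (measurable_const.indicator (hA i).1).const_mul _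

theorem isFinSimple_finset_sum {ι : Type*} (t : Finset ι) (c : ι → ℝ) {A : ι → Set (Fin n → ℝ)}
    (hA : ∀ i ∈ t, MeasurableSet (A i) ∧ volume (A i) < ⊤) :
    IsFinSimple n fun x => ∑ i ∈ t, c i * (A i).indicator (fun _ => 1) x := by
  refine ⟨t.card, fun j => c (t.equivFin.symm j), fun j => A (t.equivFin.symm j),
    fun j => hA _ (t.equivFin.symm j).2, funext fun x => ?_⟩
  rw [← Finset.sum_coe_sort t]
  exact (Equiv.sum_comp t.equivFin.symm (fun i => c i * (A i).indicator (fun _ => 1) x)).symm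

theorem IsFinSimple.tendsto_morreyNorm_indicator (hq : 1 ≤ q) (hqp : q ≤ p) (hg : IsFinSimple n g)
    {E : ℕ → Set (Fin n → ℝ)} (hE : ∀ k, MeasurableSet (E k))
    (hlim : ∀ᵐ x, Tendsto (fun k => (E k).indicator (fun _ => (1 : ℝ)) x) atTop (𝓝 0)) :
    Tendsto (fun k => morreyNorm n p q ((E k).indicator g)) atTop (𝓝 0) := by
  obtain ⟨N, c, A, hA, rfl⟩ := hg
  have hp : 0 < p := zero_lt_one.trans_le (hq.trans hqp)
  have hbound : ∀ k, morreyNorm n p q ((E k).indicator fun x =>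
      ∑ i, c i * (A i).indicator (fun _ => 1) x) ≤
      ∑ i, ENNReal.ofReal |c i| * volume (E k ∩ A i) ^ (1 / p) := fun k => by
    convert morreyNorm_sum_const_mul_indicator_le hq hqp Finset.univ c
      (fun i => (hE k).inter (hA i).1) using 2
    ext x
    by_cases hx : x ∈ E k <;> simp [hx, ← indicator_indicator]
  have hsum : Tendsto (fun k => ∑ i, ENNReal.ofReal |c i| * volume (E k ∩ A i) ^ (1 / p))
      atTop (𝓝 (∑ i, ENNReal.ofReal |c i| * 0 ^ (1 / p))) :=
    tendsto_finsetSum _ fun i _ => ENNReal.Tendsto.const_mul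
      ((ENNReal.continuous_rpow_const.tendsto 0).comp
        (tendsto_measure_inter_of_tendsto_indicator hE hlim (hA i).1 (hA i).2.ne))
      (Or.inr ofReal_ne_top)
  rw [ENNReal.zero_rpow_of_pos (one_div_pos.2 hp)] at hsum
  simp only [mul_zero, Finset.sum_const_zero] at hsum
  exact tendsto_of_tendsto_of_tendsto_of_le_of_le tendsto_const_nhds hsum (fun _ => zero_le)
    hbound

end FinSimple

section Equivalence

variable {n : ℕ} {p q : ℝ} {f : (Fin n → ℝ) → ℝ}

theorem memMorreyHat_of_memMorreyTilde (hq : 1 ≤ q) (hqp : q ≤ p)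
    (hf : MemMorreyTilde n p q f) : MemMorreyHat n p q f := by
  obtain ⟨hmeas, hfin, happrox⟩ := hf
  have hq0 : 0 < q := zero_lt_one.trans_le hq
  refine ⟨hmeas, hfin, fun E hE hlim => ENNReal.tendsto_nhds_zero.2 fun ε hε => ?_⟩
  obtain ⟨r, -, hr0, hrε⟩ := ENNReal.lt_iff_exists_real_btwn.1 (ENNReal.half_pos hε.ne')
  obtain ⟨g, hg, hfg⟩ := happrox r (ENNReal.ofReal_pos.1 hr0)
  filter_upwards [(hg.tendsto_morreyNorm_indicator hq hqp hE hlim).eventually_le_const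
    (ENNReal.half_pos hε.ne')] with k hk
  have hsplit : (E k).indicator f =
      fun x => (E k).indicator (fun x => f x - g x) x + (E k).indicator g x := by
    ext x
    by_cases hx : x ∈ E k <;> simp [hx]
  calc morreyNorm n p q ((E k).indicator f)
      ≤ morreyNorm n p q ((E k).indicator fun x => f x - g x) +
          morreyNorm n p q ((E k).indicator g) := by
        rw [hsplit]
        exact morreyNorm_add_le hq ((hmeas.sub hg.measurable).indicator (hE k))
          (hg.measurable.indicator (hE k))
    _ ≤ ε / 2 + ε / 2 := by
        gcongr
        exact (morreyNorm_indicator_le hq0 _ _).trans (hfg.trans hrε.le)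
    _ = ε := ENNReal.add_halves ε

theorem exists_isFinSimple_abs_sub_le {h : (Fin n → ℝ) → ℝ} (hh : Measurable h)
    {B : Set (Fin n → ℝ)} (hB : MeasurableSet B) (hBfin : volume B < ⊤)
    (hhB : ∀ x ∉ B, h x = 0) {K : ℝ} (hK : ∀ x, |h x| ≤ K) {δ : ℝ} (hδ : 0 < δ) :
    ∃ g, IsFinSimple n g ∧ ∀ x, |h x - g x| ≤ δ * B.indicator (fun _ => 1) x := by
  set M := ⌈K / δ⌉
  set A : ℤ → Set (Fin n → ℝ) := fun j => B ∩ {x | ⌊h x / δ⌋ = j}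
  have hA : ∀ j, MeasurableSet (A j) ∧ volume (A j) < ⊤ := fun j =>
    ⟨hB.inter ((hh.div_const δ).floor (measurableSet_singleton j)),
      (measure_mono inter_subset_left).trans_lt hBfin⟩
  refine ⟨fun x => ∑ j ∈ Finset.Icc (-M) M, (j * δ) * (A j).indicator (fun _ => 1) x,
    isFinSimple_finset_sum _ _ fun j _ => hA j, fun x => ?_⟩
  dsimp only
  by_cases hx : x ∈ B
  · have hfloor : ⌊h x / δ⌋ ∈ Finset.Icc (-M) M := by
      refine Finset.mem_Icc.2 ⟨?_, ?_⟩
      · rw [← Int.floor_neg, ← neg_div]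
        exact Int.floor_mono (div_le_div_of_nonneg_right (neg_le_of_abs_le (hK x)) hδ.le)
      · exact (Int.floor_mono (div_le_div_of_nonneg_right (le_of_abs_le (hK x)) hδ.le)).trans
          (Int.floor_le_ceil _)
    have hAx : ∀ j, (A j).indicator (fun _ => (1 : ℝ)) x = if ⌊h x / δ⌋ = j then 1 else 0 :=
      fun j => by by_cases hj : ⌊h x / δ⌋ = j <;> simp [A, hx, hj]
    simp_rw [hAx, mul_ite, mul_one, mul_zero, Finset.sum_ite_eq, if_pos hfloor,
      indicator_of_mem hx, mul_one, abs_le]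
    constructor <;> linarith [Int.sub_floor_div_mul_nonneg (h x) hδ,
      Int.sub_floor_div_mul_lt (h x) hδ]
  · simp [A, hx, hhB x hx]

theorem MemMorreyHat.exists_morreyNorm_indicator_compl_lt (hf : MemMorreyHat n p q f)
    {η : ℝ≥0∞} (hη : 0 < η) :
    ∃ k : ℕ, morreyNorm n p q ({x | |f x| ≤ k ∧ ‖x‖ ≤ k}ᶜ.indicator f) < η := by
  obtain ⟨hmeas, -, hac⟩ := hf
  set E : ℕ → Set (Fin n → ℝ) := fun k => {x | |f x| ≤ k ∧ ‖x‖ ≤ k}ᶜ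
  have hE : ∀ k, MeasurableSet (E k) := fun k =>
    ((measurableSet_le hmeas.abs measurable_const).inter
      (measurableSet_le measurable_norm measurable_const)).compl
  have hlim : ∀ᵐ x, Tendsto (fun k => (E k).indicator (fun _ => (1 : ℝ)) x) atTop (𝓝 0) := by
    refine ae_of_all _ fun x => tendsto_indicator_one_nhds_zero_iff.2 ?_
    obtain ⟨K, hK⟩ := exists_nat_ge (max |f x| ‖x‖)
    filter_upwards [eventually_ge_atTop K] with k hk
    simpa [E] using max_le_iff.1 (hK.trans (Nat.cast_le.2 hk))
  exact ((hac E hE hlim).eventually_lt_const hη).exists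

theorem memMorreyTilde_of_memMorreyHat (hq : 1 ≤ q) (hqp : q ≤ p)
    (hf : MemMorreyHat n p q f) : MemMorreyTilde n p q f := by
  have hq0 : 0 < q := zero_lt_one.trans_le hq
  refine ⟨hf.1, hf.2.1, fun ε hε => ?_⟩
  have hε2 : 0 < ε / 2 := half_pos hε
  obtain ⟨k, hk⟩ := hf.exists_morreyNorm_indicator_compl_lt (ENNReal.ofReal_pos.2 hε2)
  set S := {x | |f x| ≤ k ∧ ‖x‖ ≤ (k : ℝ)}
  have hS : MeasurableSet S := (measurableSet_le hf.1.abs measurable_const).inter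
    (measurableSet_le measurable_norm measurable_const)
  set B := Metric.closedBall (0 : Fin n → ℝ) k
  have hBfin : volume B < ⊤ := measure_closedBall_lt_top
  have hSB : ∀ x ∉ B, S.indicator f x = 0 := fun x hx =>
    indicator_of_notMem (fun hxS => hx (mem_closedBall_zero_iff.2 hxS.2)) f
  have hbdd : ∀ x, |S.indicator f x| ≤ k := fun x => by
    by_cases hx : x ∈ S
    · simpa [hx] using hx.1
    · simp [hx]
  obtain ⟨δ, hδ, hδB⟩ := ENNReal.exists_nnreal_pos_mul_lt
    (ENNReal.rpow_ne_top_of_nonneg (y := 1 / p) (one_div_nonneg.2 (hq0.le.trans hqp)) hBfin.ne)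
    (ENNReal.ofReal_pos.2 hε2).ne'
  obtain ⟨g, hg, hSg⟩ := exists_isFinSimple_abs_sub_le (hf.1.indicator hS) measurableSet_closedBall
    hBfin hSB hbdd hδ
  refine ⟨g, hg, ?_⟩
  calc morreyNorm n p q (fun x => f x - g x)
      = morreyNorm n p q (fun x => Sᶜ.indicator f x + (S.indicator f x - g x)) := by
        simp_rw [← add_sub_assoc, indicator_compl_add_self_apply]
    _ ≤ morreyNorm n p q (Sᶜ.indicator f) + morreyNorm n p q (fun x => S.indicator f x - g x) :=
        morreyNorm_add_le hq (hf.1.indicator hS.compl) ((hf.1.indicator hS).sub hg.measurable)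
    _ ≤ ENNReal.ofReal (ε / 2) + ENNReal.ofReal (ε / 2) :=
        add_le_add hk.le ((morreyNorm_le_of_abs_le_mul_indicator hq0 hqp
          measurableSet_closedBall hSg).trans hδB.le)
    _ = ENNReal.ofReal ε := by rw [← ENNReal.ofReal_add hε2.le hε2.le, add_halves]

end Equivalence

/-- M̃^p_q(ℝⁿ) = M̂^p_q(ℝⁿ). -/
theorem stmt15 (n : ℕ) (p q : ℝ) (hq : 1 < q) (hqp : q ≤ p)
    (f : (Fin n → ℝ) → ℝ) :
    MemMorreyTilde n p q f ↔ MemMorreyHat n p q f :=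
  ⟨memMorreyHat_of_memMorreyTilde hq.le hqp, memMorreyTilde_of_memMorreyHat hq.le hqp⟩
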